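/- arXiv:1104.0696 — 2 statements merged into one kernel-verified Lean document; each statement's English description precedes it below -/
import Mathlib

section
/- In any associative unital ℂ-algebra A whose elements b_i^ξ, f_α^η satisfy the defining relations of the relative parabose set P_BF, the elements {b_i^+, b_j^-}, [f_α^+, f_β^-], {b_i^+, f_α^-}, {f_α^+, b_i^-} satisfy the commutation–anticommutation relations of the general linear Lie superalgebra gl(m/n): for all i,j,k,l ∈ I and α,β,γ,δ' ∈ J: [{b_i^+, b_j^-}, {b_k^+, b_l^-}] = 2δ_{jk}{b_i^+, b_l^-} − 2δ_{il}{b_k^+, b_j^-}; [{b_i^+, b_j^-}, [f_α^+, f_β^-]] = 0; [[f_α^+, f_β^-], [f_γ^+, f_{δ'}^-]] = 2δ_{βγ}[f_α^+, f_{δ'}^-] − 2δ_{α δ'}[f_γ^+, f_β^-]; {{f_α^+, b_i^-}, {f_β^+, b_j^-}} = 0; {{f_α^-, b_i^+}, {f_β^-, b_j^+}} = 0; {{f_α^+, b_i^-}, {f_β^-, b_j^+}} = 2δ_{ij}[f_α^+, f_β^-] + 2δ_{αβ}{b_j^+, b_i^-}; [{b_i^+, b_j^-}, {f_α^+, b_l^-}]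 = −2δ_{il}{f_α^+, b_j^-}; [{b_i^+, b_j^-}, {f_α^-, b_l^+}] = 2δ_{jl}{f_α^-, b_i^+}; [[f_α^+, f_β^-], {f_γ^+, b_l^-}] = 2δ_{βγ}{f_α^+, b_l^-}; [[f_α^+, f_β^-], {f_γ^-, b_l^+}] = −2δ_{αγ}{f_β^-, b_l^+}. -/
/-!
Each bilinear acts on the generators through a derivation-type identity such as
`[x, {u, v}] = {[x, u], v} + {u, [x, v]}`, so every relation reduces to two trilinear relations
evaluated at fixed signs; for instance `{b_i^+, b_j^-}` acts on `b_k^+` as `2 δ_{jk} b_i^+`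
and on `b_k^-` as `-2 δ_{ik} b_j^-`, exactly as the matrix unit `E_{ij}` of `gl(m/n)`.
-/

/-- The commutator `[x, y] = x*y - y*x`. -/
def pbComm {A : Type*} [Ring A] (x y : A) : A := x * y - y * x

/-- The anticommutator `{x, y} = x*y + y*x`. -/
def pbAComm {A : Type*} [Ring A] (x y : A) : A := x * y + y * x

/-- Kronecker delta with values in `ℂ`. -/
def kd {I : Type*} [DecidableEq I] (i j : I) : ℂ := if i = j then 1 else 0

/-- A sign, i.e. `+1` or `-1`, regarded as an integer. -/
def IsSign (x : ℤ) : Prop := x = 1 ∨ x = -1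

/-- The defining trilinear relations of the relative parabose set `P_BF`,
for a family `b` of parabosonic and `f` of parafermionic generators. -/
structure PBFRelations {A : Type*} [Ring A] [Algebra ℂ A]
    {I J : Type*} [DecidableEq I] [DecidableEq J]
    (b : I → ℤ → A) (f : J → ℤ → A) : Prop where
  rel_bbb : ∀ (i j k : I) (ξ η ε : ℤ), IsSign ξ → IsSign η → IsSign ε →
    pbComm (pbAComm (b i ξ) (b j η)) (b k ε)
      = (((ε - η : ℤ) : ℂ) * kd j k) • b i ξ + (((ε - ξ : ℤ) : ℂ) * kd i k) • b j η
  rel_fff : ∀ (α β γ : J) (ξ η ε : ℤ), IsSign ξ → IsSign η → IsSign ε →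
    pbComm (pbComm (f α ξ) (f β η)) (f γ ε)
      = ((((ε - η) ^ 2 : ℤ) : ℂ) / 2 * kd β γ) • f α ξ
        - ((((ε - ξ) ^ 2 : ℤ) : ℂ) / 2 * kd α γ) • f β η
  rel_bbf : ∀ (i j : I) (α : J) (ξ η ε : ℤ), IsSign ξ → IsSign η → IsSign ε →
    pbComm (pbAComm (b i ξ) (b j η)) (f α ε) = 0
  rel_ffb : ∀ (α β : J) (i : I) (ξ η ε : ℤ), IsSign ξ → IsSign η → IsSign ε →
    pbComm (pbComm (f α ξ) (f β η)) (b i ε) = 0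
  rel_fbb : ∀ (α : J) (i j : I) (ξ η ε : ℤ), IsSign ξ → IsSign η → IsSign ε →
    pbComm (pbAComm (f α ξ) (b i η)) (b j ε) = (((ε - η : ℤ) : ℂ) * kd i j) • f α ξ
  rel_bff : ∀ (i : I) (α β : J) (ξ η ε : ℤ), IsSign ξ → IsSign η → IsSign ε →
    pbAComm (pbAComm (b i ξ) (f α η)) (f β ε) = ((((ε - η) ^ 2 : ℤ) : ℂ) / 2 * kd α β) • b i ξ

section Brackets

variable {A : Type*} [Ring A]

theorem pbAComm_comm (x y : A) : pbAComm x y = pbAComm y x :=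
  add_comm _ _

theorem pbComm_pbComm (x u v : A) :
    pbComm x (pbComm u v) = pbComm (pbComm x u) v + pbComm u (pbComm x v) := by
  simp only [pbComm]; noncomm_ring

theorem pbComm_pbAComm (x u v : A) :
    pbComm x (pbAComm u v) = pbAComm (pbComm x u) v + pbAComm u (pbComm x v) := by
  simp only [pbComm, pbAComm]; noncomm_ring

theorem pbAComm_pbAComm (x u v : A) :
    pbAComm x (pbAComm u v) = pbAComm (pbAComm x u) v + pbComm (pbComm x v) u := by
  simp only [pbComm, pbAComm]; noncomm_ring

@[simp] theorem pbComm_zero_left (y : A) : pbComm 0 y = 0 := by simp [pbComm]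
@[simp] theorem pbComm_zero_right (x : A) : pbComm x 0 = 0 := by simp [pbComm]
@[simp] theorem pbAComm_zero_left (y : A) : pbAComm 0 y = 0 := by simp [pbAComm]
@[simp] theorem pbAComm_zero_right (x : A) : pbAComm x 0 = 0 := by simp [pbAComm]

variable {R : Type*} [Monoid R] [DistribMulAction R A] [IsScalarTower R A A] [SMulCommClass R A A]

@[simp] theorem pbComm_smul_left (c : R) (x y : A) : pbComm (c • x) y = c • pbComm x y := by
  simp only [pbComm, smul_mul_assoc, mul_smul_comm, smul_sub]

@[simp] theorem pbComm_smul_right (c : R) (x y : A) : pbComm x (c • y) = c • pbComm x y := by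
  simp only [pbComm, smul_mul_assoc, mul_smul_comm, smul_sub]

@[simp] theorem pbAComm_smul_left (c : R) (x y : A) : pbAComm (c • x) y = c • pbAComm x y := by
  simp only [pbAComm, smul_mul_assoc, mul_smul_comm, smul_add]

@[simp] theorem pbAComm_smul_right (c : R) (x y : A) : pbAComm x (c • y) = c • pbAComm x y := by
  simp only [pbAComm, smul_mul_assoc, mul_smul_comm, smul_add]

end Brackets

theorem isSign_one : IsSign 1 := .inl rfl

theorem isSign_neg_one : IsSign (-1) := .inr rfl

namespace PBFRelations

variable {A : Type*} [Ring A] [Algebra ℂ A] {I J : Type*} [DecidableEq I] [DecidableEq J]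
  {b : I → ℤ → A} {f : J → ℤ → A} (h : PBFRelations b f)
include h

theorem comm_bb_b_plus (i j k : I) :
    pbComm (pbAComm (b i 1) (b j (-1))) (b k 1) = (2 * kd j k) • b i 1 := by
  simpa using h.rel_bbb i j k 1 (-1) 1 isSign_one isSign_neg_one isSign_one

theorem comm_bb_b_minus (i j k : I) :
    pbComm (pbAComm (b i 1) (b j (-1))) (b k (-1)) = (-(2 * kd i k)) • b j (-1) := by
  have := h.rel_bbb i j k 1 (-1) (-1) isSign_one isSign_neg_one isSign_neg_one
  norm_num at this
  rw [this, neg_smul]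

theorem comm_ff_f_plus (α β γ : J) :
    pbComm (pbComm (f α 1) (f β (-1))) (f γ 1) = (2 * kd β γ) • f α 1 := by
  have := h.rel_fff α β γ 1 (-1) 1 isSign_one isSign_neg_one isSign_one
  norm_num at this
  exact this

theorem comm_ff_f_minus (α β γ : J) :
    pbComm (pbComm (f α 1) (f β (-1))) (f γ (-1)) = (-(2 * kd α γ)) • f β (-1) := by
  have := h.rel_fff α β γ 1 (-1) (-1) isSign_one isSign_neg_one isSign_neg_one
  norm_num at this
  rw [this, neg_smul]

theorem comm_bb_f (i j : I) (α : J) {ε : ℤ} (hε : IsSign ε) :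
    pbComm (pbAComm (b i 1) (b j (-1))) (f α ε) = 0 :=
  h.rel_bbf i j α 1 (-1) ε isSign_one isSign_neg_one hε

theorem comm_ff_b (α β : J) (i : I) {ε : ℤ} (hε : IsSign ε) :
    pbComm (pbComm (f α 1) (f β (-1))) (b i ε) = 0 :=
  h.rel_ffb α β i 1 (-1) ε isSign_one isSign_neg_one hε

theorem comm_fb_b_self (α : J) (i j : I) {ξ η : ℤ} (hξ : IsSign ξ) (hη : IsSign η) :
    pbComm (pbAComm (f α ξ) (b i η)) (b j η) = 0 := by
  simpa using h.rel_fbb α i j ξ η η hξ hη hη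

theorem comm_fb_b_minus_plus (α : J) (i j : I) {ξ : ℤ} (hξ : IsSign ξ) :
    pbComm (pbAComm (f α ξ) (b i (-1))) (b j 1) = (2 * kd i j) • f α ξ := by
  simpa using h.rel_fbb α i j ξ (-1) 1 hξ isSign_neg_one isSign_one

theorem acomm_fb_f_self (α β : J) (i : I) {ξ η : ℤ} (hξ : IsSign ξ) (hη : IsSign η) :
    pbAComm (pbAComm (f α η) (b i ξ)) (f β η) = 0 := by
  simpa [pbAComm_comm (f α η)] using h.rel_bff i α β ξ η η hξ hη hη

theorem acomm_fb_f_plus_minus (α β : J) (i : I) {ξ : ℤ} (hξ : IsSign ξ) :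
    pbAComm (pbAComm (f α 1) (b i ξ)) (f β (-1)) = (2 * kd α β) • b i ξ := by
  have := h.rel_bff i α β ξ 1 (-1) hξ isSign_one isSign_neg_one
  norm_num [pbAComm_comm (b i ξ)] at this
  exact this

theorem comm_bb_bb (i j k l : I) :
    pbComm (pbAComm (b i 1) (b j (-1))) (pbAComm (b k 1) (b l (-1)))
      = (2 * kd j k) • pbAComm (b i 1) (b l (-1)) - (2 * kd i l) • pbAComm (b k 1) (b j (-1)) := by
  rw [pbComm_pbAComm, h.comm_bb_b_plus, h.comm_bb_b_minus, pbAComm_smul_left, pbAComm_smul_right,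
    neg_smul, sub_eq_add_neg]

theorem comm_bb_ff (i j : I) (α β : J) :
    pbComm (pbAComm (b i 1) (b j (-1))) (pbComm (f α 1) (f β (-1))) = 0 := by
  rw [pbComm_pbComm, h.comm_bb_f i j α isSign_one, h.comm_bb_f i j β isSign_neg_one,
    pbComm_zero_left, pbComm_zero_right, add_zero]

theorem comm_ff_ff (α β γ δ : J) :
    pbComm (pbComm (f α 1) (f β (-1))) (pbComm (f γ 1) (f δ (-1)))
      = (2 * kd β γ) • pbComm (f α 1) (f δ (-1)) - (2 * kd α δ) • pbComm (f γ 1) (f β (-1)) := by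
  rw [pbComm_pbComm, h.comm_ff_f_plus, h.comm_ff_f_minus, pbComm_smul_left, pbComm_smul_right,
    neg_smul, sub_eq_add_neg]

theorem acomm_fb_fb_plus (α β : J) (i j : I) :
    pbAComm (pbAComm (f α 1) (b i (-1))) (pbAComm (f β 1) (b j (-1))) = 0 := by
  rw [pbAComm_pbAComm, h.acomm_fb_f_self α β i isSign_neg_one isSign_one,
    h.comm_fb_b_self α i j isSign_one isSign_neg_one, pbAComm_zero_left, pbComm_zero_left,
    add_zero]

theorem acomm_fb_fb_minus (α β : J) (i j : I) :
    pbAComm (pbAComm (f α (-1)) (b i 1)) (pbAComm (f β (-1)) (b j 1)) = 0 := by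
  rw [pbAComm_pbAComm, h.acomm_fb_f_self α β i isSign_one isSign_neg_one,
    h.comm_fb_b_self α i j isSign_neg_one isSign_one, pbAComm_zero_left, pbComm_zero_left,
    add_zero]

theorem acomm_fb_fb (α β : J) (i j : I) :
    pbAComm (pbAComm (f α 1) (b i (-1))) (pbAComm (f β (-1)) (b j 1))
      = (2 * kd i j) • pbComm (f α 1) (f β (-1)) + (2 * kd α β) • pbAComm (b j 1) (b i (-1)) := by
  rw [pbAComm_pbAComm, h.acomm_fb_f_plus_minus α β i isSign_neg_one,
    h.comm_fb_b_minus_plus α i j isSign_one, pbAComm_smul_left, pbComm_smul_left,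
    pbAComm_comm (b i (-1)), add_comm]

theorem comm_bb_fb_plus (i j l : I) (α : J) :
    pbComm (pbAComm (b i 1) (b j (-1))) (pbAComm (f α 1) (b l (-1)))
      = (-(2 * kd i l)) • pbAComm (f α 1) (b j (-1)) := by
  rw [pbComm_pbAComm, h.comm_bb_f i j α isSign_one, h.comm_bb_b_minus, pbAComm_zero_left,
    zero_add, pbAComm_smul_right]

theorem comm_bb_fb_minus (i j l : I) (α : J) :
    pbComm (pbAComm (b i 1) (b j (-1))) (pbAComm (f α (-1)) (b l 1))
      = (2 * kd j l) • pbAComm (f α (-1)) (b i 1) := by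
  rw [pbComm_pbAComm, h.comm_bb_f i j α isSign_neg_one, h.comm_bb_b_plus, pbAComm_zero_left,
    zero_add, pbAComm_smul_right]

theorem comm_ff_fb_plus (α β γ : J) (l : I) :
    pbComm (pbComm (f α 1) (f β (-1))) (pbAComm (f γ 1) (b l (-1)))
      = (2 * kd β γ) • pbAComm (f α 1) (b l (-1)) := by
  rw [pbComm_pbAComm, h.comm_ff_f_plus, h.comm_ff_b α β l isSign_neg_one, pbAComm_zero_right,
    add_zero, pbAComm_smul_left]

theorem comm_ff_fb_minus (α β γ : J) (l : I) :
    pbComm (pbComm (f α 1) (f β (-1))) (pbAComm (f γ (-1)) (b l 1))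
      = (-(2 * kd α γ)) • pbAComm (f β (-1)) (b l 1) := by
  rw [pbComm_pbAComm, h.comm_ff_f_minus, h.comm_ff_b α β l isSign_one, pbAComm_zero_right,
    add_zero, pbAComm_smul_left]

end PBFRelations


/-- The bilinears `{b_i^+, b_j^-}`, `[f_α^+, f_β^-]`, `{b_i^+, f_α^-}`, `{f_α^+, b_i^-}`
satisfy the commutation-anticommutation relations of `gl(m/n)`. -/
theorem gl_mn_relations {A : Type*} [Ring A] [Algebra ℂ A]
    {I J : Type*} [DecidableEq I] [DecidableEq J]
    (b : I → ℤ → A) (f : J → ℤ → A) (h : PBFRelations b f) :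
    ∀ (i j k l : I) (α β γ δ' : J),
      (pbComm (pbAComm (b i 1) (b j (-1))) (pbAComm (b k 1) (b l (-1)))
        = (2 * kd j k) • pbAComm (b i 1) (b l (-1)) - (2 * kd i l) • pbAComm (b k 1) (b j (-1))) ∧
      (pbComm (pbAComm (b i 1) (b j (-1))) (pbComm (f α 1) (f β (-1))) = 0) ∧
      (pbComm (pbComm (f α 1) (f β (-1))) (pbComm (f γ 1) (f δ' (-1)))
        = (2 * kd β γ) • pbComm (f α 1) (f δ' (-1)) - (2 * kd α δ') • pbComm (f γ 1) (f β (-1))) ∧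
      (pbAComm (pbAComm (f α 1) (b i (-1))) (pbAComm (f β 1) (b j (-1))) = 0) ∧
      (pbAComm (pbAComm (f α (-1)) (b i 1)) (pbAComm (f β (-1)) (b j 1)) = 0) ∧
      (pbAComm (pbAComm (f α 1) (b i (-1))) (pbAComm (f β (-1)) (b j 1))
        = (2 * kd i j) • pbComm (f α 1) (f β (-1)) + (2 * kd α β) • pbAComm (b j 1) (b i (-1))) ∧
      (pbComm (pbAComm (b i 1) (b j (-1))) (pbAComm (f α 1) (b l (-1)))
        = (-(2 * kd i l)) • pbAComm (f α 1) (b j (-1))) ∧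
      (pbComm (pbAComm (b i 1) (b j (-1))) (pbAComm (f α (-1)) (b l 1))
        = (2 * kd j l) • pbAComm (f α (-1)) (b i 1)) ∧
      (pbComm (pbComm (f α 1) (f β (-1))) (pbAComm (f γ 1) (b l (-1)))
        = (2 * kd β γ) • pbAComm (f α 1) (b l (-1))) ∧
      (pbComm (pbComm (f α 1) (f β (-1))) (pbAComm (f γ (-1)) (b l 1))
        = (-(2 * kd α γ)) • pbAComm (f β (-1)) (b l 1)) :=
  fun i j k l α β γ δ' =>
    ⟨h.comm_bb_bb i j k l, h.comm_bb_ff i j α β, h.comm_ff_ff α β γ δ', h.acomm_fb_fb_plus α β i j,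
      h.acomm_fb_fb_minus α β i j, h.acomm_fb_fb α β i j, h.comm_bb_fb_plus i j l α,
      h.comm_bb_fb_minus i j l α, h.comm_ff_fb_plus α β γ l, h.comm_ff_fb_minus α β γ l⟩
end

section
/- In any associative unital ℂ-algebra A whose elements b⁺, b⁻, f⁺, f⁻ satisfy the defining relations of P_BF^{(1,1)}, the odd elements Q^±, R^± satisfy the anticommutation relations: (Q⁺)² = (Q⁻)² = (R⁺)² = (R⁻)² = 0; {Q⁺, Q⁻} = ½{b⁺, b⁻} + ½[f⁺, f⁻]; {R⁺, R⁻} = ½{b⁺, b⁻} − ½[f⁺, f⁻]; {Q⁺, R⁺} = 0; {Q⁻, R⁻} = 0; {Q⁻, R⁺} = (b⁺)²; {Q⁺, R⁻} = (b⁻)². -/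
/-- The defining relations of the relative parabose set `P_BF^{(1,1)}` in a single
parabosonic and a single parafermionic degree of freedom: `b 1 = b⁺`, `b (-1) = b⁻`,
`f 1 = f⁺`, `f (-1) = f⁻`. -/
structure PBF11Relations {A : Type*} [Ring A] [Algebra ℂ A] (b f : ℤ → A) : Prop where
  rel_bbb : ∀ (ξ η ε : ℤ), IsSign ξ → IsSign η → IsSign ε →
    pbComm (pbAComm (b ξ) (b η)) (b ε)
      = ((ε - η : ℤ) : ℂ) • b ξ + ((ε - ξ : ℤ) : ℂ) • b η
  rel_fff : ∀ (ξ η ε : ℤ), IsSign ξ → IsSign η → IsSign ε →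
    pbComm (pbComm (f ξ) (f η)) (f ε)
      = ((((ε - η) ^ 2 : ℤ) : ℂ) / 2) • f ξ - ((((ε - ξ) ^ 2 : ℤ) : ℂ) / 2) • f η
  rel_bbf : ∀ (ξ η ε : ℤ), IsSign ξ → IsSign η → IsSign ε →
    pbComm (pbAComm (b ξ) (b η)) (f ε) = 0
  rel_ffb : ∀ (ξ η ε : ℤ), IsSign ξ → IsSign η → IsSign ε →
    pbComm (pbComm (f ξ) (f η)) (b ε) = 0
  rel_fbb : ∀ (ξ η ε : ℤ), IsSign ξ → IsSign η → IsSign ε →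
    pbComm (pbAComm (f ξ) (b η)) (b ε) = ((ε - η : ℤ) : ℂ) • f ξ
  rel_bff : ∀ (ξ η ε : ℤ), IsSign ξ → IsSign η → IsSign ε →
    pbAComm (pbAComm (b ξ) (f η)) (f ε) = ((((ε - η) ^ 2 : ℤ) : ℂ) / 2) • b ξ

/-- `Q⁺ := ½{b⁻, f⁺}`. -/
noncomputable def Qp {A : Type*} [Ring A] [Algebra ℂ A] (b f : ℤ → A) : A :=
  (1 / 2 : ℂ) • pbAComm (b (-1)) (f 1)

/-- `Q⁻ := ½{b⁺, f⁻}`. -/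
noncomputable def Qm {A : Type*} [Ring A] [Algebra ℂ A] (b f : ℤ → A) : A :=
  (1 / 2 : ℂ) • pbAComm (b 1) (f (-1))

/-- `R⁺ := ½{b⁺, f⁺}`. -/
noncomputable def Rp {A : Type*} [Ring A] [Algebra ℂ A] (b f : ℤ → A) : A :=
  (1 / 2 : ℂ) • pbAComm (b 1) (f 1)

/-- `R⁻ := ½{b⁻, f⁻}`. -/
noncomputable def Rm {A : Type*} [Ring A] [Algebra ℂ A] (b f : ℤ → A) : A :=
  (1 / 2 : ℂ) • pbAComm (b (-1)) (f (-1))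

/-!
Each of `Q^±, R^±` is `½{b^ξ, f^η}` for suitable signs. For `X = {b^ξ, f^η}` the relations
give `[X, b^ε] = (ε - ξ) f^η` and `{X, f^ε} = ½(ε - η)² b^ξ`, so the graded Leibniz rule
`{X, {y, z}} = [[X, y], z] + {y, {X, z}}` turns every anticommutator of two such elements into
an explicit combination of `{b, b}` and `[f, f]`. When both factors coincide the coefficients
vanish, and over `ℂ` the square of `X` is half of `{X, X}`.
-/

section Bracket

variable {A : Type*} [Ring A]

theorem pbComm_self (x : A) : pbComm x x = 0 := sub_self _

theorem pbAComm_pbAComm_right (x y z : A) :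
    pbAComm x (pbAComm y z) = pbComm (pbComm x y) z + pbAComm y (pbAComm x z) := by
  simp only [pbComm, pbAComm]
  noncomm_ring

theorem mul_self_eq_zero_of_pbAComm_self_eq_zero {K : Type*} [Field K] [NeZero (2 : K)]
    [Module K A] {x : A} (hx : pbAComm x x = 0) : x * x = 0 := by
  have h2 : (2 : K) • (x * x) = 0 := by rw [two_smul]; exact hx
  exact (smul_eq_zero.mp h2).resolve_left two_ne_zero

end Bracket

namespace PBF11Relations

variable {A : Type*} [Ring A] [Algebra ℂ A] {b f : ℤ → A}

theorem pbComm_pbAComm_bf_b (h : PBF11Relations b f) {ξ η ε : ℤ}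
    (hξ : IsSign ξ) (hη : IsSign η) (hε : IsSign ε) :
    pbComm (pbAComm (b ξ) (f η)) (b ε) = ((ε - ξ : ℤ) : ℂ) • f η := by
  rw [pbAComm_comm]
  exact h.rel_fbb η ξ ε hη hξ hε

theorem pbAComm_pbAComm_bf_bf (h : PBF11Relations b f) {ξ η ξ' η' : ℤ}
    (hξ : IsSign ξ) (hη : IsSign η) (hξ' : IsSign ξ') (hη' : IsSign η') :
    pbAComm (pbAComm (b ξ) (f η)) (pbAComm (b ξ') (f η'))
      = ((((η' - η) ^ 2 : ℤ) : ℂ) / 2) • pbAComm (b ξ') (b ξ)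
        + ((ξ' - ξ : ℤ) : ℂ) • pbComm (f η) (f η') := by
  rw [pbAComm_pbAComm_right, h.pbComm_pbAComm_bf_b hξ hη hξ', h.rel_bff ξ η η' hξ hη hη']
  simp only [pbComm, pbAComm, smul_mul_assoc, mul_smul_comm, smul_add, smul_sub]
  abel

theorem pbAComm_half_bf_half_bf (h : PBF11Relations b f) {ξ η ξ' η' : ℤ}
    (hξ : IsSign ξ) (hη : IsSign η) (hξ' : IsSign ξ') (hη' : IsSign η') :
    pbAComm ((1 / 2 : ℂ) • pbAComm (b ξ) (f η)) ((1 / 2 : ℂ) • pbAComm (b ξ') (f η'))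
      = ((((η' - η) ^ 2 : ℤ) : ℂ) / 8) • pbAComm (b ξ') (b ξ)
        + (((ξ' - ξ : ℤ) : ℂ) / 4) • pbComm (f η) (f η') := by
  have key := h.pbAComm_pbAComm_bf_bf hξ hη hξ' hη'
  simp only [pbAComm] at key ⊢
  rw [smul_mul_smul_comm, smul_mul_smul_comm, ← smul_add, key]
  module

theorem half_pbAComm_bf_mul_self (h : PBF11Relations b f) {ξ η : ℤ}
    (hξ : IsSign ξ) (hη : IsSign η) :
    (1 / 2 : ℂ) • pbAComm (b ξ) (f η) * (1 / 2 : ℂ) • pbAComm (b ξ) (f η) = 0 := by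
  refine mul_self_eq_zero_of_pbAComm_self_eq_zero (K := ℂ) ?_
  rw [h.pbAComm_half_bf_half_bf hξ hη hξ hη]
  simp [pbComm_self]

end PBF11Relations

/-- The odd elements `Q^±, R^±` of `P_BF^{(1,1)}` satisfy the stated
anticommutation relations. -/
theorem QR_anticommutation {A : Type*} [Ring A] [Algebra ℂ A]
    (b f : ℤ → A) (h : PBF11Relations b f) :
    Qp b f * Qp b f = 0 ∧
    Qm b f * Qm b f = 0 ∧
    Rp b f * Rp b f = 0 ∧
    Rm b f * Rm b f = 0 ∧
    pbAComm (Qp b f) (Qm b f)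
      = (1 / 2 : ℂ) • pbAComm (b 1) (b (-1)) + (1 / 2 : ℂ) • pbComm (f 1) (f (-1)) ∧
    pbAComm (Rp b f) (Rm b f)
      = (1 / 2 : ℂ) • pbAComm (b 1) (b (-1)) - (1 / 2 : ℂ) • pbComm (f 1) (f (-1)) ∧
    pbAComm (Qp b f) (Rp b f) = 0 ∧
    pbAComm (Qm b f) (Rm b f) = 0 ∧
    pbAComm (Qm b f) (Rp b f) = b 1 * b 1 ∧
    pbAComm (Qp b f) (Rm b f) = b (-1) * b (-1) := by
  have hp : IsSign 1 := .inl rfl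
  have hm : IsSign (-1) := .inr rfl
  refine ⟨h.half_pbAComm_bf_mul_self hm hp, h.half_pbAComm_bf_mul_self hp hm,
    h.half_pbAComm_bf_mul_self hp hp, h.half_pbAComm_bf_mul_self hm hm, ?_, ?_, ?_, ?_, ?_, ?_⟩
  · rw [Qp, Qm, h.pbAComm_half_bf_half_bf hm hp hp hm]
    norm_num
  · rw [Rp, Rm, h.pbAComm_half_bf_half_bf hp hp hm hm, pbAComm_comm (b (-1))]
    norm_num [sub_eq_add_neg]
  · rw [Qp, Rp, h.pbAComm_half_bf_half_bf hm hp hp hp]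
    norm_num [pbComm_self]
  · rw [Qm, Rm, h.pbAComm_half_bf_half_bf hp hm hm hm]
    norm_num [pbComm_self]
  · rw [Qm, Rp, h.pbAComm_half_bf_half_bf hp hm hp hp, pbAComm]
    module
  · rw [Qp, Rm, h.pbAComm_half_bf_half_bf hm hp hm hm, pbAComm]
    module
end
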